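/- arXiv:2301.04906 — 6 statements merged into one kernel-verified Lean document; each statement's English description precedes it below -/
import Mathlib

section
/- Let λ_1,…,λ_k ∈ ℂ be distinct, ŵ ∈ ℂ^k, h ∈ ℂ^k. Define B̂ = ŵ (column vector), R = 𝟙_kᵀ (all-ones row vector), Λ = diag(λ_1,…,λ_k), Â = Λ − B̂R, and Ĉ = (h_1,…,h_k) (row vector). Then for every s ∈ ℂ not an eigenvalue of Â and with s ≠ λ_i for all i and 1 + Σ_{i=1}^k ŵ_i/(s−λ_i) ≠ 0, Ĉ(sI_k − Â)^{-1}B̂ = (Σ_{i=1}^k ŵ_i h_i/(s−λ_i)) / (1 + Σ_{i=1}^k ŵ_i/(s−λ_i)). -/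
/-! The resolvent `s I - Â = diag(s - λ) + ŵ 𝟙ᵀ` is a rank-one perturbation of an invertible
diagonal matrix, so `(s I - Â) x = ŵ` is solved explicitly à la Sherman–Morrison:
`x_i = ŵ_i / ((s - λ_i) (1 + ∑_j ŵ_j / (s - λ_j)))`. Pairing with `h` gives the barycentric form. -/

open Matrix

namespace Matrix

variable {ι K : Type*} [Fintype ι] [DecidableEq ι] [Field K]

theorem diagonal_add_vecMulVec_mulVec_eq_self {d u v : ι → K} (hd : ∀ i, d i ≠ 0)
    (hc : 1 + ∑ j, v j * u j / d j ≠ 0) :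
    (diagonal d + vecMulVec u v) *ᵥ (fun i => u i / d i / (1 + ∑ j, v j * u j / d j)) = u := by
  set c := 1 + ∑ j, v j * u j / d j
  have hvx : v ⬝ᵥ (fun i => u i / d i / c) = (c - 1) / c := by
    simp only [dotProduct, c, add_sub_cancel_left, Finset.sum_div, mul_div_assoc]
  ext i
  rw [add_mulVec, vecMulVec_mulVec, hvx, Pi.add_apply, mulVec_diagonal, Pi.smul_apply,
    op_smul_eq_mul]
  field_simp [hd i]
  ring

end Matrix

theorem barycentric_transfer_function_general (k : ℕ) (lam : Fin k → ℂ)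
    (w h : Fin k → ℂ) (s : ℂ)
    (A : Matrix (Fin k) (Fin k) ℂ)
    (hA : A = Matrix.diagonal lam - Matrix.vecMulVec w (fun _ => (1 : ℂ)))
    (hs : IsUnit (s • (1 : Matrix (Fin k) (Fin k) ℂ) - A))
    (hslam : ∀ i, s ≠ lam i)
    (hden : 1 + ∑ i, w i / (s - lam i) ≠ 0) :
    h ⬝ᵥ ((s • (1 : Matrix (Fin k) (Fin k) ℂ) - A)⁻¹ *ᵥ w) =
      (∑ i, w i * h i / (s - lam i)) / (1 + ∑ i, w i / (s - lam i)) := by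
  have := hs.invertible
  have hresolvent : s • (1 : Matrix (Fin k) (Fin k) ℂ) - A =
      diagonal (fun i => s - lam i) + vecMulVec w (fun _ => 1) := by
    ext i j
    by_cases hij : i = j
    · simp [hA, hij, vecMulVec_apply]; ring
    · simp [hA, hij, vecMulVec_apply]
  have hsolve := diagonal_add_vecMulVec_mulVec_eq_self (u := w) (v := fun _ => (1 : ℂ))
    (fun i => sub_ne_zero.mpr (hslam i)) (by simpa only [one_mul] using hden)
  simp only [one_mul] at hsolve
  rw [inv_mulVec_eq_vec (hresolvent ▸ hsolve.symm), dotProduct, Finset.sum_div]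
  congr! 1 with i
  ring

theorem barycentric_transfer_function (k : ℕ) (lam : Fin k → ℂ)
    (hlam : Function.Injective lam) (w h : Fin k → ℂ) (s : ℂ)
    (A : Matrix (Fin k) (Fin k) ℂ)
    (hA : A = Matrix.diagonal lam - Matrix.vecMulVec w (fun _ => (1 : ℂ)))
    (hs : IsUnit (s • (1 : Matrix (Fin k) (Fin k) ℂ) - A))
    (hslam : ∀ i, s ≠ lam i)
    (hden : 1 + ∑ i, w i / (s - lam i) ≠ 0) :
    h ⬝ᵥ ((s • (1 : Matrix (Fin k) (Fin k) ℂ) - A)⁻¹ *ᵥ w) =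
      (∑ i, w i * h i / (s - lam i)) / (1 + ∑ i, w i / (s - lam i)) :=
  barycentric_transfer_function_general k lam w h s A hA hs hslam hden
end

section
/- Let λ_1,…,λ_k ∈ ℂ be distinct, ζ_1,…,ζ_k ∈ ℂ distinct with ζ_i ≠ λ_j, and let ŵ = −C^{-1}𝟙_k where C_{ij} = 1/(ζ_i − λ_j) is the (invertible) Cauchy matrix. Set Â = diag(λ_1,…,λ_k) − ŵ𝟙ᵀ. Then for each j, the matrix ζ_j I_k − Â is singular, i.e., every prescribed ζ_j is an eigenvalue of Â. -/
open Matrix Polynomial Finset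

lemma cauchy_det_ne_zero (k : ℕ) (zeta lam : Fin k → ℂ)
    (hzeta : Function.Injective zeta) (hlam : Function.Injective lam)
    (hdisj : ∀ i j, zeta i ≠ lam j)
    (C : Matrix (Fin k) (Fin k) ℂ)
    (hC : C = Matrix.of fun i j => 1 / (zeta i - lam j)) : C.det ≠ 0 := by
  intro hdet
  obtain ⟨v, hv, hCv⟩ := (Matrix.exists_mulVec_eq_zero_iff).mpr hdet
  obtain ⟨l0, hl0⟩ := Function.ne_iff.mp hv
  simp only [Pi.zero_apply] at hl0
  set P : ℂ[X] := ∑ l, Polynomial.C (v l) *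
      ∏ m ∈ Finset.univ.erase l, (X - Polynomial.C (lam m)) with hP
  have hdeg : P.natDegree < k := by
    have hk : 0 < k := l0.pos
    have hb : ∀ l ∈ Finset.univ, (Polynomial.C (v l) *
        ∏ m ∈ Finset.univ.erase l, (X - Polynomial.C (lam m))).natDegree ≤ k - 1 := by
      intro l _
      refine le_trans (Polynomial.natDegree_C_mul_le _ _) ?_
      have : (∏ m ∈ Finset.univ.erase l, (X - Polynomial.C (lam m))).natDegree
          = (Finset.univ.erase l).card := by
        rw [Polynomial.natDegree_prod]
        · simp
        · intro m _; exact Polynomial.X_sub_C_ne_zero _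
      rw [this, Finset.card_erase_of_mem (Finset.mem_univ _), Finset.card_univ,
        Fintype.card_fin]
    exact lt_of_le_of_lt (Polynomial.natDegree_sum_le_of_forall_le _ _ hb) (by omega)
  have heval : ∀ i, P.eval (zeta i) = 0 := by
    intro i
    have hzero := congrFun hCv i
    have hzero' : ∑ l, v l / (zeta i - lam l) = 0 := by
      simpa [Matrix.mulVec, dotProduct, hC, div_eq_mul_inv, mul_comm] using hzero
    have hterm : ∀ l, v l * ∏ m ∈ Finset.univ.erase l, (zeta i - lam m)
        = (∏ m, (zeta i - lam m)) * (v l / (zeta i - lam l)) := by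
      intro l
      rw [← Finset.mul_prod_erase Finset.univ _ (Finset.mem_univ l)]
      have hne : zeta i - lam l ≠ 0 := sub_ne_zero.mpr (hdisj i l)
      field_simp
    simp only [hP, Polynomial.eval_finset_sum, Polynomial.eval_mul, Polynomial.eval_C,
      Polynomial.eval_prod, Polynomial.eval_sub, Polynomial.eval_X]
    rw [Finset.sum_congr rfl fun l _ => hterm l, ← Finset.mul_sum, hzero', mul_zero]
  have hP0 : P = 0 := by
    refine Polynomial.eq_zero_of_natDegree_lt_card_of_eval_eq_zero P hzeta heval ?_
    simpa using hdeg
  have hvl0 : v l0 = 0 := by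
    have h0 := congrArg (Polynomial.eval (lam l0)) hP0
    simp only [hP, Polynomial.eval_finset_sum, Polynomial.eval_mul, Polynomial.eval_C,
      Polynomial.eval_prod, Polynomial.eval_sub, Polynomial.eval_X, Polynomial.eval_zero] at h0
    rw [Finset.sum_eq_single l0] at h0
    · have hprod : (∏ m ∈ Finset.univ.erase l0, (lam l0 - lam m)) ≠ 0 := by
        refine Finset.prod_ne_zero_iff.mpr fun m hm => ?_
        exact sub_ne_zero.mpr fun h => (Finset.mem_erase.mp hm).1 (hlam h).symm
      exact (mul_eq_zero.mp h0).resolve_right hprod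
    · intro l _ hl
      have : (∏ m ∈ Finset.univ.erase l, (lam l0 - lam m)) = 0 := by
        refine Finset.prod_eq_zero (Finset.mem_erase.mpr ⟨fun h => hl h.symm, Finset.mem_univ _⟩) ?_
        simp
      rw [this, mul_zero]
    · intro h; exact absurd (Finset.mem_univ l0) h
  exact hl0 hvl0

theorem lfpp_places_poles (k : ℕ) (zeta lam : Fin k → ℂ)
    (hzeta : Function.Injective zeta) (hlam : Function.Injective lam)
    (hdisj : ∀ i j, zeta i ≠ lam j)
    (C : Matrix (Fin k) (Fin k) ℂ)
    (hC : C = Matrix.of fun i j => 1 / (zeta i - lam j))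
    (w : Fin k → ℂ) (hw : w = -(C⁻¹ *ᵥ fun _ => (1 : ℂ))) :
    ∀ j, ¬ IsUnit (zeta j • (1 : Matrix (Fin k) (Fin k) ℂ) -
      (Matrix.diagonal lam - Matrix.vecMulVec w (fun _ => (1 : ℂ)))) := by
  intro j hU
  have hdet : C.det ≠ 0 := cauchy_det_ne_zero k zeta lam hzeta hlam hdisj C hC
  have hCinv : C * C⁻¹ = 1 := Matrix.mul_nonsing_inv C (isUnit_iff_ne_zero.mpr hdet)
  have hCw : C *ᵥ w = fun _ => (-1 : ℂ) := by
    rw [hw, Matrix.mulVec_neg, Matrix.mulVec_mulVec, hCinv]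
    funext i; simp [Matrix.one_mulVec]
  set v : Fin k → ℂ := fun l => w l / (zeta j - lam l) with hv
  have hsum : ∑ l, v l = -1 := by
    have h := congrFun hCw j
    simpa [Matrix.mulVec, dotProduct, hC, hv, div_eq_mul_inv, mul_comm] using h
  have hwne : w ≠ 0 := by
    intro h
    have := congrFun hCw j
    rw [h] at this
    simp at this
  obtain ⟨l1, hl1⟩ := Function.ne_iff.mp hwne
  have hvne : v ≠ 0 := by
    intro h
    apply hl1
    have := congrFun h l1
    simp only [hv, Pi.zero_apply] at this
    exact (div_eq_zero_iff.mp this).resolve_right (sub_ne_zero.mpr (hdisj j l1))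
  set M := zeta j • (1 : Matrix (Fin k) (Fin k) ℂ) -
      (Matrix.diagonal lam - Matrix.vecMulVec w (fun _ => (1 : ℂ))) with hM
  have hMv : M *ᵥ v = 0 := by
    funext i
    simp only [hM, Matrix.mulVec, dotProduct, Matrix.sub_apply, Matrix.smul_apply,
      Matrix.one_apply, Matrix.diagonal_apply, Matrix.vecMulVec_apply, smul_eq_mul, mul_one,
      Pi.zero_apply]
    have hterm : ∀ l, (zeta j * (if i = l then (1:ℂ) else 0) -
        ((if i = l then lam i else 0) - w i)) * v l
        = (if l = i then (zeta j - lam i) * v i else 0) + w i * v l := by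
      intro l
      by_cases h : i = l
      · subst h; simp; ring
      · simp [h, Ne.symm h]
    rw [Finset.sum_congr rfl fun l _ => hterm l, Finset.sum_add_distrib,
      Finset.sum_ite_eq' Finset.univ i (fun _ => (zeta j - lam i) * v i), ← Finset.mul_sum, hsum]
    have : (zeta j - lam i) * v i = w i := by
      rw [hv]
      field_simp [sub_ne_zero.mpr (hdisj j i)]
    simp [this]
  have hdetM : M.det = 0 := Matrix.exists_mulVec_eq_zero_iff.mp ⟨v, hvne, hMv⟩
  have := (Matrix.isUnit_iff_isUnit_det M).mp hU
  rw [hdetM] at this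
  exact (isUnit_iff_ne_zero.mp this) rfl
end

section
/- Let A ∈ ℂ^{n×n}, B ∈ ℂ^{n×1}, and let s_1,…,s_k ∈ ℂ be distinct points none of which is an eigenvalue of A. Set S = diag(s_1,…,s_k) and R = 𝟙_kᵀ (all-ones row). Then the matrix Π ∈ ℂ^{n×k} whose j-th column is (s_j I_n − A)^{-1}B is the unique solution of the Sylvester equation AΠ + BR = ΠS; consequently, for a row vector C ∈ ℂ^{1×n}, the j-th entry of CΠ equals the transfer function value H(s_j) = C(s_j I − A)^{-1}B. -/
open Matrix

theorem moments_sylvester_characterization (n k : ℕ)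
    (A : Matrix (Fin n) (Fin n) ℂ) (B : Fin n → ℂ)
    (s : Fin k → ℂ) (hs : Function.Injective s)
    (hinv : ∀ j, IsUnit (s j • (1 : Matrix (Fin n) (Fin n) ℂ) - A))
    (Pi : Matrix (Fin n) (Fin k) ℂ)
    (hPi : Pi = Matrix.of fun i j =>
      ((s j • (1 : Matrix (Fin n) (Fin n) ℂ) - A)⁻¹ *ᵥ B) i) :
    (A * Pi + Matrix.vecMulVec B (fun _ => (1 : ℂ)) = Pi * Matrix.diagonal s) ∧
      (∀ Pi' : Matrix (Fin n) (Fin k) ℂ,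
        A * Pi' + Matrix.vecMulVec B (fun _ => (1 : ℂ)) = Pi' * Matrix.diagonal s →
          Pi' = Pi) ∧
      (∀ C : Fin n → ℂ, ∀ j,
        (C ᵥ* Pi) j = C ⬝ᵥ ((s j • (1 : Matrix (Fin n) (Fin n) ℂ) - A)⁻¹ *ᵥ B)) := by
  subst hPi
  have hdet : ∀ j, IsUnit (s j • (1 : Matrix (Fin n) (Fin n) ℂ) - A).det := fun j =>
    (Matrix.isUnit_iff_isUnit_det _).mp (hinv j)
  have hkey : ∀ j, (s j • (1 : Matrix (Fin n) (Fin n) ℂ) - A) *ᵥ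
      ((s j • (1 : Matrix (Fin n) (Fin n) ℂ) - A)⁻¹ *ᵥ B) = B := by
    intro j
    rw [Matrix.mulVec_mulVec, Matrix.mul_nonsing_inv _ (hdet j), Matrix.one_mulVec]
  have h2 : ∀ j i, (∑ x, A i x * ((s j • (1 : Matrix (Fin n) (Fin n) ℂ) - A)⁻¹ *ᵥ B) x) + B i
      = s j * ((s j • (1 : Matrix (Fin n) (Fin n) ℂ) - A)⁻¹ *ᵥ B) i := by
    intro j i
    have h := congrFun (hkey j) i
    simp only [Matrix.sub_mulVec, Matrix.smul_mulVec, Matrix.one_mulVec,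
      Pi.sub_apply, Pi.smul_apply, smul_eq_mul] at h
    rw [show (A *ᵥ ((s j • (1 : Matrix (Fin n) (Fin n) ℂ) - A)⁻¹ *ᵥ B)) i
      = ∑ x, A i x * ((s j • (1 : Matrix (Fin n) (Fin n) ℂ) - A)⁻¹ *ᵥ B) x from rfl] at h
    linear_combination -h
  refine ⟨?_, ?_, ?_⟩
  · ext i j
    rw [Matrix.add_apply, Matrix.mul_diagonal]
    simp only [Matrix.mul_apply, Matrix.vecMulVec_apply, Matrix.of_apply, mul_one]
    linear_combination h2 j i
  · intro Pi' hEq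
    ext i j
    have hw : (s j • (1 : Matrix (Fin n) (Fin n) ℂ) - A) *ᵥ (fun x => Pi' x j) = B := by
      rw [Matrix.sub_mulVec, Matrix.smul_mulVec, Matrix.one_mulVec]
      funext i'
      have h := congrFun (congrFun hEq i') j
      rw [Matrix.add_apply, Matrix.mul_diagonal] at h
      simp only [Matrix.mul_apply, Matrix.vecMulVec_apply, mul_one] at h
      simp only [Pi.sub_apply, Pi.smul_apply, smul_eq_mul]
      rw [show (A *ᵥ (fun x => Pi' x j)) i' = ∑ x, A i' x * Pi' x j from rfl]
      linear_combination -h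
    have hcol : (s j • (1 : Matrix (Fin n) (Fin n) ℂ) - A)⁻¹ *ᵥ B = fun x => Pi' x j := by
      have h := congrArg (fun w => (s j • (1 : Matrix (Fin n) (Fin n) ℂ) - A)⁻¹ *ᵥ w) hw
      simpa [Matrix.mulVec_mulVec, Matrix.nonsing_inv_mul _ (hdet j),
        Matrix.one_mulVec] using h.symm
    simpa [Matrix.of_apply] using (congrFun hcol i).symm
  · intro C j
    simp [Matrix.vecMul, dotProduct, Matrix.of_apply]
end

section
/- Let E, A ∈ ℂ^{n×n}, B ∈ ℂ^{n×1}, C_ζ ∈ ℂ^{1×n}, and distinct points ζ_1,…,ζ_k, λ_1,…,λ_k with all pencil matrices ζ_iE − A and λ_jE − A invertible and ζ_i ≠ λ_j. Suppose C_ζ(λ_jE − A)^{-1}B = 0 for all j. Define H_ζ(s) = C_ζ(sE − A)^{-1}B, W^H with rows C_ζ(ζ_iE − A)^{-1}, and V with columns (λ_jE − A)^{-1}B. Then the entries of Ẽ = W^H E V satisfy Ẽ_{ij} = −H_ζ(ζ_i)/(ζ_i − λ_j), i.e., Ẽ = −D·C where D = diag(H_ζ(ζ_1),…,H_ζ(ζ_k))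 and C is the Cauchy matrix C_{ij} = 1/(ζ_i − λ_j). -/
open Matrix

theorem projected_E_is_scaled_cauchy (n k : ℕ)
    (E A : Matrix (Fin n) (Fin n) ℂ) (B Czeta : Fin n → ℂ)
    (zeta lam : Fin k → ℂ)
    (hzeta : Function.Injective zeta) (hlam : Function.Injective lam)
    (hdisj : ∀ i j, zeta i ≠ lam j)
    (hinvz : ∀ i, IsUnit (zeta i • E - A))
    (hinvl : ∀ j, IsUnit (lam j • E - A))
    (hker : ∀ j, Czeta ⬝ᵥ ((lam j • E - A)⁻¹ *ᵥ B) = 0)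
    (Hzeta : ℂ → ℂ) (hH : Hzeta = fun s => Czeta ⬝ᵥ ((s • E - A)⁻¹ *ᵥ B))
    (WH : Matrix (Fin k) (Fin n) ℂ)
    (hW : WH = Matrix.of fun i l => (Czeta ᵥ* (zeta i • E - A)⁻¹) l)
    (V : Matrix (Fin n) (Fin k) ℂ)
    (hV : V = Matrix.of fun l j => ((lam j • E - A)⁻¹ *ᵥ B) l) :
    (∀ i j, (WH * E * V) i j = -(Hzeta (zeta i)) / (zeta i - lam j)) ∧
      WH * E * V = -(Matrix.diagonal (fun i => Hzeta (zeta i)) *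
        Matrix.of fun i j => 1 / (zeta i - lam j)) := by
  have main : ∀ i j, (WH * E * V) i j = -(Hzeta (zeta i)) / (zeta i - lam j) := by
    intro i j
    set Z := zeta i • E - A with hZ
    set L := lam j • E - A with hL
    have hZd : IsUnit Z.det := (Matrix.isUnit_iff_isUnit_det Z).mp (hinvz i)
    have hLd : IsUnit L.det := (Matrix.isUnit_iff_isUnit_det L).mp (hinvl j)
    have hZZ : Z⁻¹ * Z = 1 := Matrix.nonsing_inv_mul Z hZd
    have hLL : L * L⁻¹ = 1 := Matrix.mul_nonsing_inv L hLd
    have hc : lam j - zeta i ≠ 0 := by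
      intro h
      exact hdisj i j (by linear_combination -h)
    -- key matrix identity
    have hdiff : L - Z = (lam j - zeta i) • E := by
      rw [hZ, hL]
      rw [sub_smul]
      abel
    have key : Z⁻¹ * E * L⁻¹ = (lam j - zeta i)⁻¹ • (Z⁻¹ - L⁻¹) := by
      have h1 : Z⁻¹ * (L - Z) * L⁻¹ = Z⁻¹ - L⁻¹ := by
        rw [Matrix.mul_sub, Matrix.sub_mul, Matrix.mul_assoc Z⁻¹ L L⁻¹, hLL,
          Matrix.mul_one, hZZ, Matrix.one_mul]
      rw [hdiff] at h1
      have h2 : (lam j - zeta i) • (Z⁻¹ * E * L⁻¹) = Z⁻¹ - L⁻¹ := by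
        rw [← h1]
        rw [Matrix.mul_smul, Matrix.smul_mul]
      rw [← h2, smul_smul, inv_mul_cancel₀ hc, one_smul]
    -- entry formula
    have hrowW : WH i = Czeta ᵥ* Z⁻¹ := by
      subst hW; funext l; rfl
    have hcolV : (fun l => V l j) = L⁻¹ *ᵥ B := by
      subst hV; funext l; rfl
    have hentry : (WH * E * V) i j
        = Czeta ⬝ᵥ ((Z⁻¹ * E * L⁻¹) *ᵥ B) := by
      have h1 : (WH * E) i = WH i ᵥ* E := by
        funext l; simp [Matrix.mul_apply, Matrix.vecMul, dotProduct]
      have h2 : (WH * E * V) i j = ((WH * E) i) ⬝ᵥ (fun l => V l j) := by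
        simp [Matrix.mul_apply, dotProduct]
      rw [h2, h1, hrowW, hcolV]
      simp only [Matrix.dotProduct_mulVec, Matrix.vecMul_vecMul, Matrix.mul_assoc]
    rw [hentry, key, Matrix.smul_mulVec, dotProduct_smul,
      Matrix.sub_mulVec, dotProduct_sub, hker j, sub_zero, hH]
    simp only [smul_eq_mul]
    rw [← hZ]
    have hneg : lam j - zeta i = -(zeta i - lam j) := by ring
    rw [hneg, inv_neg, div_eq_mul_inv]
    ring
  refine ⟨main, ?_⟩
  ext i j
  rw [main i j]
  simp [Matrix.mul_apply, Matrix.diagonal_apply, Finset.sum_ite_eq, div_eq_mul_inv,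
    one_div, neg_div]
end

section
/- Under the same assumptions (C_ζ(λ_jE−A)^{-1}B = 0 for all j), with Ã = W^H A V, the entries satisfy Ã_{ij} = −ζ_i H_ζ(ζ_i)/(ζ_i − λ_j), i.e., Ã = −Z·D·C with Z = diag(ζ_1,…,ζ_k), and consequently for each j, e_jᵀ(ζ_j Ẽ − Ã) = 0, so the pencil (Ẽ, Ã) has ζ_j as a generalized eigenvalue for every j = 1,…,k. -/
/-!
Both resolvent identities come from writing `(ζ - λ) E` and `(ζ - λ) A` as combinations of
`ζ E - A` and `λ E - A`:
`(ζ - λ) (ζE - A)⁻¹ E (λE - A)⁻¹ = (λE - A)⁻¹ - (ζE - A)⁻¹` and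
`(ζ - λ) (ζE - A)⁻¹ A (λE - A)⁻¹ = λ (λE - A)⁻¹ - ζ (ζE - A)⁻¹`.
Sandwiching them between `C_ζ` and `B` shows that the projected pencil is the (negated) Loewner
pencil: `Ẽ_ij = (H(λ_j) - H(ζ_i)) / (ζ_i - λ_j)` and
`Ã_ij = (λ_j H(λ_j) - ζ_i H(ζ_i)) / (ζ_i - λ_j)`. Since `H(λ_j) = 0`, `Ã_ij = ζ_i Ẽ_ij`, so row
`i` of `ζ_i Ẽ - Ã` vanishes.
-/

open Matrix

section Resolvent

variable {n R : Type*} [Fintype n] [DecidableEq n] [CommRing R]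

theorem Matrix.nonsing_inv_mul_smul_sub_smul_mul_nonsing_inv {U V : Matrix n n R}
    (hU : IsUnit U) (hV : IsUnit V) (a b : R) :
    U⁻¹ * (a • U - b • V) * V⁻¹ = a • V⁻¹ - b • U⁻¹ := by
  rw [Matrix.mul_sub, Matrix.sub_mul, mul_smul_comm, mul_smul_comm, smul_mul_assoc,
    smul_mul_assoc, nonsing_inv_mul _ ((isUnit_iff_isUnit_det U).mp hU), Matrix.one_mul,
    Matrix.mul_assoc, mul_nonsing_inv _ ((isUnit_iff_isUnit_det V).mp hV), Matrix.mul_one]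

variable {E A : Matrix n n R} {μ ν : R}

theorem resolvent_mul_E_mul_resolvent (hμ : IsUnit (μ • E - A)) (hν : IsUnit (ν • E - A)) :
    (μ - ν) • ((μ • E - A)⁻¹ * E * (ν • E - A)⁻¹) = (ν • E - A)⁻¹ - (μ • E - A)⁻¹ := by
  have h := nonsing_inv_mul_smul_sub_smul_mul_nonsing_inv hμ hν 1 1
  rwa [one_smul, one_smul, one_smul, one_smul, sub_sub_sub_cancel_right, ← sub_smul,
    mul_smul_comm, smul_mul_assoc] at h

theorem resolvent_mul_A_mul_resolvent (hμ : IsUnit (μ • E - A)) (hν : IsUnit (ν • E - A)) :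
    (μ - ν) • ((μ • E - A)⁻¹ * A * (ν • E - A)⁻¹) = ν • (ν • E - A)⁻¹ - μ • (μ • E - A)⁻¹ := by
  have h := nonsing_inv_mul_smul_sub_smul_mul_nonsing_inv hμ hν ν μ
  have hA : ν • (μ • E - A) - μ • (ν • E - A) = (μ - ν) • A := by module
  rwa [hA, mul_smul_comm, smul_mul_assoc] at h

end Resolvent

section TransferFunction

variable {n m p R : Type*} [Fintype n] [DecidableEq n] [CommRing R]

noncomputable def transferFunction (E A : Matrix n n R) (b c : n → R) (s : R) : R :=
  c ⬝ᵥ ((s • E - A)⁻¹ *ᵥ b)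

variable {E A : Matrix n n R} {μ ν : R} (b c : n → R)

theorem sub_mul_dotProduct_resolvent_mul_E_mul_resolvent (hμ : IsUnit (μ • E - A))
    (hν : IsUnit (ν • E - A)) :
    (μ - ν) * (c ⬝ᵥ (((μ • E - A)⁻¹ * E * (ν • E - A)⁻¹) *ᵥ b)) =
      transferFunction E A b c ν - transferFunction E A b c μ := by
  rw [← smul_eq_mul, ← dotProduct_smul, ← smul_mulVec, resolvent_mul_E_mul_resolvent hμ hν,
    sub_mulVec, dotProduct_sub, transferFunction, transferFunction]

theorem sub_mul_dotProduct_resolvent_mul_A_mul_resolvent (hμ : IsUnit (μ • E - A))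
    (hν : IsUnit (ν • E - A)) :
    (μ - ν) * (c ⬝ᵥ (((μ • E - A)⁻¹ * A * (ν • E - A)⁻¹) *ᵥ b)) =
      ν * transferFunction E A b c ν - μ * transferFunction E A b c μ := by
  rw [← smul_eq_mul, ← dotProduct_smul, ← smul_mulVec, resolvent_mul_A_mul_resolvent hμ hν,
    sub_mulVec, dotProduct_sub, smul_mulVec, smul_mulVec, dotProduct_smul, dotProduct_smul,
    transferFunction, transferFunction, smul_eq_mul, smul_eq_mul]

noncomputable def leftProjection (E A : Matrix n n R) (c : n → R) (ζ : m → R) : Matrix m n R :=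
  of fun i l => (c ᵥ* (ζ i • E - A)⁻¹) l

noncomputable def rightProjection (E A : Matrix n n R) (b : n → R) (lam : p → R) :
    Matrix n p R :=
  of fun l j => ((lam j • E - A)⁻¹ *ᵥ b) l

variable {ζ : m → R} {lam : p → R} {i : m} {j : p}

theorem leftProjection_mul_mul_rightProjection_apply (X : Matrix n n R) :
    (leftProjection E A c ζ * X * rightProjection E A b lam) i j =
      c ⬝ᵥ (((ζ i • E - A)⁻¹ * X * (lam j • E - A)⁻¹) *ᵥ b) := by
  change (c ᵥ* (ζ i • E - A)⁻¹ ᵥ* X) ⬝ᵥ ((lam j • E - A)⁻¹ *ᵥ b) = _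
  rw [vecMul_vecMul, ← dotProduct_mulVec, mulVec_mulVec]

end TransferFunction

section Loewner

variable {n m p K : Type*} [Fintype n] [DecidableEq n] [Field K]
  {E A : Matrix n n K} (b c : n → K) {ζ : m → K} {lam : p → K} {i : m} {j : p}

theorem leftProjection_mul_E_mul_rightProjection_apply (hζ : IsUnit (ζ i • E - A))
    (hlam : IsUnit (lam j • E - A)) (hne : ζ i ≠ lam j) :
    (leftProjection E A c ζ * E * rightProjection E A b lam) i j =
      (transferFunction E A b c (lam j) - transferFunction E A b c (ζ i)) / (ζ i - lam j) := by
  rw [eq_div_iff (sub_ne_zero.mpr hne), mul_comm, leftProjection_mul_mul_rightProjection_apply,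
    sub_mul_dotProduct_resolvent_mul_E_mul_resolvent b c hζ hlam]

theorem leftProjection_mul_A_mul_rightProjection_apply (hζ : IsUnit (ζ i • E - A))
    (hlam : IsUnit (lam j • E - A)) (hne : ζ i ≠ lam j) :
    (leftProjection E A c ζ * A * rightProjection E A b lam) i j =
      (lam j * transferFunction E A b c (lam j) - ζ i * transferFunction E A b c (ζ i)) /
        (ζ i - lam j) := by
  rw [eq_div_iff (sub_ne_zero.mpr hne), mul_comm, leftProjection_mul_mul_rightProjection_apply,
    sub_mul_dotProduct_resolvent_mul_A_mul_resolvent b c hζ hlam]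

end Loewner

theorem projected_A_and_pencil_poles_general (n k : ℕ)
    (E A : Matrix (Fin n) (Fin n) ℂ) (B Czeta : Fin n → ℂ)
    (zeta lam : Fin k → ℂ)
    (hdisj : ∀ i j, zeta i ≠ lam j)
    (hinvz : ∀ i, IsUnit (zeta i • E - A))
    (hinvl : ∀ j, IsUnit (lam j • E - A))
    (hker : ∀ j, Czeta ⬝ᵥ ((lam j • E - A)⁻¹ *ᵥ B) = 0)
    (Hzeta : ℂ → ℂ) (hH : Hzeta = fun s => Czeta ⬝ᵥ ((s • E - A)⁻¹ *ᵥ B))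
    (WH : Matrix (Fin k) (Fin n) ℂ)
    (hW : WH = Matrix.of fun i l => (Czeta ᵥ* (zeta i • E - A)⁻¹) l)
    (V : Matrix (Fin n) (Fin k) ℂ)
    (hV : V = Matrix.of fun l j => ((lam j • E - A)⁻¹ *ᵥ B) l) :
    (∀ i j, (WH * A * V) i j = -(zeta i * Hzeta (zeta i)) / (zeta i - lam j)) ∧
      WH * A * V = -(Matrix.diagonal zeta * Matrix.diagonal (fun i => Hzeta (zeta i)) *
        Matrix.of fun i j => 1 / (zeta i - lam j)) ∧
      (∀ j, (Pi.single j (1 : ℂ)) ᵥ* (zeta j • (WH * E * V) - WH * A * V) = 0) := by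
  obtain rfl : Hzeta = transferFunction E A B Czeta := hH
  obtain rfl : WH = leftProjection E A Czeta zeta := hW
  obtain rfl : V = rightProjection E A B lam := hV
  have hA : ∀ i j, (leftProjection E A Czeta zeta * A * rightProjection E A B lam) i j =
      -(zeta i * transferFunction E A B Czeta (zeta i)) / (zeta i - lam j) := fun i j => by
    rw [leftProjection_mul_A_mul_rightProjection_apply B Czeta (hinvz i) (hinvl j) (hdisj i j),
      transferFunction, hker, mul_zero, zero_sub]
  have hE : ∀ i j, (leftProjection E A Czeta zeta * E * rightProjection E A B lam) i j =
      -transferFunction E A B Czeta (zeta i) / (zeta i - lam j) := fun i j => by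
    rw [leftProjection_mul_E_mul_rightProjection_apply B Czeta (hinvz i) (hinvl j) (hdisj i j),
      transferFunction, hker, zero_sub]
  refine ⟨hA, ?_, fun j => ?_⟩
  · ext i j
    simp only [hA, diagonal_mul_diagonal, diagonal_mul, Matrix.neg_apply, of_apply, one_div]
    ring
  · rw [single_one_vecMul]
    ext l
    simp only [row_apply, Matrix.sub_apply, Matrix.smul_apply, smul_eq_mul, hA, hE,
      Pi.zero_apply]
    ring

theorem projected_A_and_pencil_poles (n k : ℕ)
    (E A : Matrix (Fin n) (Fin n) ℂ) (B Czeta : Fin n → ℂ)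
    (zeta lam : Fin k → ℂ)
    (hzeta : Function.Injective zeta) (hlam : Function.Injective lam)
    (hdisj : ∀ i j, zeta i ≠ lam j)
    (hinvz : ∀ i, IsUnit (zeta i • E - A))
    (hinvl : ∀ j, IsUnit (lam j • E - A))
    (hker : ∀ j, Czeta ⬝ᵥ ((lam j • E - A)⁻¹ *ᵥ B) = 0)
    (Hzeta : ℂ → ℂ) (hH : Hzeta = fun s => Czeta ⬝ᵥ ((s • E - A)⁻¹ *ᵥ B))
    (WH : Matrix (Fin k) (Fin n) ℂ)
    (hW : WH = Matrix.of fun i l => (Czeta ᵥ* (zeta i • E - A)⁻¹) l)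
    (V : Matrix (Fin n) (Fin k) ℂ)
    (hV : V = Matrix.of fun l j => ((lam j • E - A)⁻¹ *ᵥ B) l) :
    (∀ i j, (WH * A * V) i j = -(zeta i * Hzeta (zeta i)) / (zeta i - lam j)) ∧
      WH * A * V = -(Matrix.diagonal zeta * Matrix.diagonal (fun i => Hzeta (zeta i)) *
        Matrix.of fun i j => 1 / (zeta i - lam j)) ∧
      (∀ j, (Pi.single j (1 : ℂ)) ᵥ* (zeta j • (WH * E * V) - WH * A * V) = 0) :=
  projected_A_and_pencil_poles_general n k E A B Czeta zeta lam hdisj hinvz hinvl hker Hzeta hH WH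
    hW V hV
end

section
/- Let λ_1,…,λ_k ∈ ℂ be distinct, ŵ, h ∈ ℂ^k, Â = diag(λ) − ŵ𝟙ᵀ, B̂ = ŵ, Ĉ = hᵀ. Suppose μ ∈ ℂ is not an eigenvalue of Â, μ ≠ λ_i for all i, and 1 + Σ_i ŵ_i/(μ−λ_i) ≠ 0. If the weights ŵ satisfy the linear (least-squares/interpolation) condition Σ_i ŵ_i (g − h_i)/(μ − λ_i) = −g for a value g ∈ ℂ, then the transfer function of (Â,B̂,Ĉ) interpolates g at μ: Ĉ(μI − Â)^{-1}B̂ = g. -/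
open Matrix

theorem loewner_ls_exact_interpolation (k : ℕ) (lam : Fin k → ℂ)
    (hlam : Function.Injective lam) (w h : Fin k → ℂ)
    (A : Matrix (Fin k) (Fin k) ℂ)
    (hA : A = Matrix.diagonal lam - Matrix.vecMulVec w (fun _ => (1 : ℂ)))
    (μ : ℂ) (g : ℂ)
    (hmu : IsUnit (μ • (1 : Matrix (Fin k) (Fin k) ℂ) - A))
    (hmulam : ∀ i, μ ≠ lam i)
    (hden : 1 + ∑ i, w i / (μ - lam i) ≠ 0)
    (hLS : ∑ i, w i * (g - h i) / (μ - lam i) = -g) :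
    h ⬝ᵥ ((μ • (1 : Matrix (Fin k) (Fin k) ℂ) - A)⁻¹ *ᵥ w) = g := by
  set M := μ • (1 : Matrix (Fin k) (Fin k) ℂ) - A with hM
  set s := ∑ i, w i / (μ - lam i) with hs
  set c := (1 + s)⁻¹ with hc
  set x : Fin k → ℂ := fun i => c * (w i / (μ - lam i)) with hx
  have hcs : c * (1 + s) = 1 := inv_mul_cancel₀ hden
  have hne : ∀ i, μ - lam i ≠ 0 := fun i => sub_ne_zero.mpr (hmulam i)
  have hsum : ∑ j, x j = c * s := by
    simp only [hx, hs, Finset.mul_sum]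
  have hMx : M *ᵥ x = w := by
    funext i
    have h1 : (M *ᵥ x) i = (μ - lam i) * x i + w i * ∑ j, x j := by
      have hterm : ∀ j, M i j * x j
          = (if i = j then (μ - lam i) * x j else 0) + w i * x j := by
        intro j
        simp only [hM, hA, Matrix.sub_apply, Matrix.smul_apply, Matrix.one_apply,
          Matrix.diagonal_apply, Matrix.vecMulVec_apply, smul_eq_mul]
        split <;> ring
      simp only [mulVec, dotProduct]
      rw [Finset.sum_congr rfl (fun j _ => hterm j), Finset.sum_add_distrib,
        Finset.sum_ite_eq Finset.univ i (fun j => (μ - lam i) * x j)]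
      simp [Finset.mul_sum]
    have hxi : (μ - lam i) * x i = c * w i := by
      simp only [hx]
      rw [mul_comm (μ - lam i), mul_assoc, div_mul_cancel₀ (w i) (hne i)]
    rw [h1, hxi, hsum]
    have : c * w i + w i * (c * s) = w i * (c * (1 + s)) := by ring
    rw [this, hcs, mul_one]
  have hinv : M⁻¹ *ᵥ w = x := by
    have hd : IsUnit M.det := (Matrix.isUnit_iff_isUnit_det M).mp hmu
    rw [← hMx, Matrix.mulVec_mulVec, Matrix.nonsing_inv_mul M hd, Matrix.one_mulVec]
  rw [hinv]
  have hT : ∑ i, h i * (w i / (μ - lam i)) = g * (1 + s) := by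
    have expand : ∀ i, w i * (g - h i) / (μ - lam i)
        = g * (w i / (μ - lam i)) - h i * (w i / (μ - lam i)) := by
      intro i
      field_simp
    rw [Finset.sum_congr rfl (fun i _ => expand i), Finset.sum_sub_distrib,
      ← Finset.mul_sum, ← hs] at hLS
    linear_combination -hLS
  have : h ⬝ᵥ x = c * ∑ i, h i * (w i / (μ - lam i)) := by
    simp only [dotProduct, hx, Finset.mul_sum]
    exact Finset.sum_congr rfl (fun i _ => by ring)
  rw [this, hT]
  calc c * (g * (1 + s)) = g * (c * (1 + s)) := by ring
    _ = g := by rw [hcs, mul_one]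
end
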